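/- Let X be a real symmetric positive definite n×n matrix and Y a real symmetric n×n matrix. Let S be the 2n×2n block matrix [[X^{1/2}, 0],[X^{−1/2}Y, X^{−1/2}]], where X^{1/2} is the positive definite square root of X. Then S is symplectic, and SᵀS equals the block matrix G := [[X + Y X⁻¹ Y, Y X⁻¹],[X⁻¹ Y, X⁻¹]]; consequently G is symmetric, positive definite, and symplectic. -/

import Mathlib

open Matrix Set

noncomputable section

/-- The standard symplectic matrix `J = [[0, I],[-I, 0]]` on `ℝ²ⁿ = ℝⁿ ⊕ ℝⁿ`. -/
def J (n : ℕ) : Matrix (Fin n ⊕ Fin n) (Fin n ⊕ Fin n) ℝ :=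
  Matrix.fromBlocks 0 1 (-1) 0

/-- `S ∈ Sp(n)` iff `Sᵀ J S = J`. -/
def IsSymplectic {n : ℕ} (S : Matrix (Fin n ⊕ Fin n) (Fin n ⊕ Fin n) ℝ) : Prop :=
  Sᵀ * J n * S = J n

/-- The positive semidefinite square root of a positive semidefinite matrix (the definition
`Matrix.PosSemidef.sqrt` of the older Mathlib, which has since been removed). -/
def Matrix.PosSemidef.sqrt {m : Type*} [Fintype m] [DecidableEq m] {A : Matrix m m ℝ}
    (hA : A.PosSemidef) : Matrix m m ℝ :=
  hA.1.eigenvectorUnitary.1 * diagonal ((↑) ∘ (√·) ∘ hA.1.eigenvalues) *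
    (star hA.1.eigenvectorUnitary : Matrix m m ℝ)

/-! With `R = X^{1/2}`, `S` is block lower triangular with diagonal blocks `R` and `R⁻¹`, and a
block matrix `[[A, 0], [C, D]]` is symplectic exactly when `AᵀC` is symmetric and `AᵀD = 1`;
here `AᵀC = Y`. Then `G = SᵀS` is symplectic as a product of symplectic matrices, and positive
definite because symplectic matrices are invertible. -/

namespace Matrix.PosSemidef

variable {m : Type*} [Fintype m] [DecidableEq m] {A : Matrix m m ℝ}

theorem sqrt_mul_self (hA : A.PosSemidef) : hA.sqrt * hA.sqrt = A := by
  set U : Matrix m m ℝ := (hA.1.eigenvectorUnitary : Matrix m m ℝ)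
  set D : Matrix m m ℝ := diagonal ((↑) ∘ (√·) ∘ hA.1.eigenvalues)
  have hUU : star U * U = 1 := Unitary.coe_star_mul_self hA.1.eigenvectorUnitary
  have hDD : D * D = diagonal ((↑) ∘ hA.1.eigenvalues) := by
    rw [diagonal_mul_diagonal]
    congr 1
    funext i
    simp [Real.mul_self_sqrt (hA.eigenvalues_nonneg i)]
  calc hA.sqrt * hA.sqrt = U * (D * (star U * U) * D) * star U := by
        simp only [sqrt, U, D, Matrix.mul_assoc]
    _ = U * diagonal ((↑) ∘ hA.1.eigenvalues) * star U := by
        rw [hUU, Matrix.mul_one, hDD, Matrix.mul_assoc]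
    _ = A := by
        conv_rhs => rw [hA.1.spectral_theorem]
        rfl

theorem transpose_sqrt (hA : A.PosSemidef) : hA.sqrtᵀ = hA.sqrt := by
  rw [← conjTranspose_eq_transpose_of_trivial, sqrt, conjTranspose_mul, conjTranspose_mul,
    diagonal_conjTranspose, ← star_eq_conjTranspose, ← star_eq_conjTranspose, star_star,
    Matrix.mul_assoc]
  congr 2

end Matrix.PosSemidef

theorem Matrix.PosDef.isUnit_sqrt {m : Type*} [Fintype m] [DecidableEq m] {A : Matrix m m ℝ}
    (hA : A.PosDef) : IsUnit hA.posSemidef.sqrt := by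
  rw [isUnit_iff_isUnit_det]
  apply isUnit_of_mul_isUnit_left (y := hA.posSemidef.sqrt.det)
  rw [← det_mul, hA.posSemidef.sqrt_mul_self, ← isUnit_iff_isUnit_det]
  exact hA.isUnit

section Symplectic

variable {n : ℕ}

theorem J_eq_neg_matrixJ : J n = -Matrix.J (Fin n) ℝ := by
  simp [_root_.J, Matrix.J, fromBlocks_neg]

theorem isSymplectic_iff_mem_symplecticGroup {S : Matrix (Fin n ⊕ Fin n) (Fin n ⊕ Fin n) ℝ} :
    IsSymplectic S ↔ S ∈ symplecticGroup (Fin n) ℝ := by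
  rw [SymplecticGroup.mem_iff', IsSymplectic, J_eq_neg_matrixJ, Matrix.mul_neg, Matrix.neg_mul,
    neg_inj]

theorem isSymplectic_fromBlocks_zero₁₂_iff {A C D : Matrix (Fin n) (Fin n) ℝ} :
    IsSymplectic (fromBlocks A 0 C D) ↔ Aᵀ * C = Cᵀ * A ∧ Aᵀ * D = 1 := by
  rw [IsSymplectic, _root_.J, fromBlocks_transpose, fromBlocks_multiply, fromBlocks_multiply,
    fromBlocks_inj]
  simp only [transpose_zero, Matrix.zero_mul, Matrix.mul_zero, zero_add, add_zero,
    Matrix.mul_one, Matrix.mul_neg, Matrix.neg_mul, neg_inj, and_true, neg_add_eq_zero]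
  constructor
  · rintro ⟨hAC, hAD, -⟩
    exact ⟨hAC.symm, hAD⟩
  · rintro ⟨hAC, hAD⟩
    refine ⟨hAC.symm, hAD, ?_⟩
    rw [← transpose_transpose (Dᵀ * A), transpose_mul, transpose_transpose, hAD, transpose_one]

theorem IsSymplectic.isUnit {S : Matrix (Fin n ⊕ Fin n) (Fin n ⊕ Fin n) ℝ}
    (hS : IsSymplectic S) : IsUnit S :=
  (isUnit_iff_isUnit_det S).2
    (SymplecticGroup.symplectic_det (isSymplectic_iff_mem_symplecticGroup.1 hS))

theorem IsSymplectic.transpose_mul_self {S : Matrix (Fin n ⊕ Fin n) (Fin n ⊕ Fin n) ℝ}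
    (hS : IsSymplectic S) : IsSymplectic (Sᵀ * S) := by
  rw [isSymplectic_iff_mem_symplecticGroup] at hS ⊢
  exact Submonoid.mul_mem _ (SymplecticGroup.transpose_mem hS) hS

theorem IsSymplectic.posDef_transpose_mul_self
    {S : Matrix (Fin n ⊕ Fin n) (Fin n ⊕ Fin n) ℝ} (hS : IsSymplectic S) :
    (Sᵀ * S).PosDef := by
  rw [← conjTranspose_eq_transpose_of_trivial]
  exact PosDef.conjTranspose_mul_self S (mulVec_injective_of_isUnit hS.isUnit)

end Symplectic

/-- for `X` symmetric positive definite and `Y` symmetric, the matrix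
`S = [[X^{1/2}, 0],[X^{-1/2}Y, X^{-1/2}]]` (with `X^{1/2}` the positive square root of
`X`) is symplectic, `SᵀS = G := [[X + YX⁻¹Y, YX⁻¹],[X⁻¹Y, X⁻¹]]`, and consequently `G`
is symmetric, positive definite and symplectic. -/
theorem gaussian_matrix_symplectic_factorization
    {n : ℕ} (X Y : Matrix (Fin n) (Fin n) ℝ)
    (hX : X.PosDef) (hY : Y.IsSymm)
    (S : Matrix (Fin n ⊕ Fin n) (Fin n ⊕ Fin n) ℝ)
    (hS : S = Matrix.fromBlocks hX.posSemidef.sqrt 0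
        ((hX.posSemidef.sqrt)⁻¹ * Y) (hX.posSemidef.sqrt)⁻¹)
    (G : Matrix (Fin n ⊕ Fin n) (Fin n ⊕ Fin n) ℝ)
    (hG : G = Matrix.fromBlocks (X + Y * X⁻¹ * Y) (Y * X⁻¹) (X⁻¹ * Y) X⁻¹) :
    IsSymplectic S ∧ Sᵀ * S = G ∧ Gᵀ = G ∧ G.PosDef ∧ IsSymplectic G := by
  set R := hX.posSemidef.sqrt
  have hRR : R * R = X := hX.posSemidef.sqrt_mul_self
  have hRt : Rᵀ = R := hX.posSemidef.transpose_sqrt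
  have hRinvt : (R⁻¹)ᵀ = R⁻¹ := by rw [transpose_nonsing_inv, hRt]
  have hRdet : IsUnit R.det := (isUnit_iff_isUnit_det R).1 hX.isUnit_sqrt
  have hRRinv : R * R⁻¹ = 1 := mul_nonsing_inv R hRdet
  have hRinvR : R⁻¹ * R = 1 := nonsing_inv_mul R hRdet
  have hRinvRinv : R⁻¹ * R⁻¹ = X⁻¹ := by rw [← hRR, Matrix.mul_inv_rev]
  have hSymp : IsSymplectic S := by
    rw [hS, isSymplectic_fromBlocks_zero₁₂_iff, transpose_mul, hRt, hRinvt, hY.eq,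
      ← Matrix.mul_assoc, hRRinv, Matrix.mul_assoc, hRinvR, Matrix.one_mul, Matrix.mul_one]
    exact ⟨rfl, rfl⟩
  have hSS : Sᵀ * S = G := by
    rw [hS, hG, fromBlocks_transpose, fromBlocks_multiply, transpose_mul, hRt, hRinvt, hY.eq,
      hRR, ← hRinvRinv]
    simp only [transpose_zero, Matrix.mul_zero, Matrix.zero_mul, zero_add,
      Matrix.mul_assoc]
  exact ⟨hSymp, hSS, hSS ▸ (isSymm_transpose_mul_self S).eq,
    hSS ▸ hSymp.posDef_transpose_mul_self, hSS ▸ hSymp.transpose_mul_self⟩
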